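/- arXiv:1311.3729 — 3 statements merged into one kernel-verified Lean document; each statement's English description precedes it below -/
import Mathlib

section
/- Determinant of a Cauchy matrix: det C_{s,t} = ∏_{i<j} (s_j − s_i)(t_i − t_j) / ∏_{i,j} (s_i − t_j). -/
/-!
Adding to every column `j ≠ 0` the multiple `-(s₀ - t₀)/(s₀ - tⱼ)` of column `0` clears the first
row off the diagonal, and turns each remaining entry into
`(sᵢ - s₀)/(sᵢ - t₀) · (t₀ - tⱼ)/(s₀ - tⱼ) · 1/(sᵢ - tⱼ)`. Expanding along the first row, the
determinant is `1/(s₀ - t₀)` times these row and column factors times the Cauchy determinant of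
the tails of `s` and `t`; the factors are exactly the ratio of the claimed formula in sizes `n + 1`
and `n`, so the formula follows by induction on `n`.
-/

open Matrix Finset

theorem Fin.prod_prod_Iio_succ {M : Type*} [CommMonoid M] {n : ℕ}
    (f : Fin (n + 1) → Fin (n + 1) → M) :
    ∏ j, ∏ i ∈ Iio j, f i j =
      (∏ j : Fin n, f 0 j.succ) * ∏ j : Fin n, ∏ i ∈ Iio j, f i.succ j.succ := by
  have swap : ∀ {m : ℕ} (g : Fin m → Fin m → M),
      ∏ j, ∏ i ∈ Iio j, g i j = ∏ i, ∏ j ∈ Ioi i, g i j :=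
    fun _ => prod_comm' (by simp)
  simp [swap, Fin.prod_univ_succ, Fin.prod_Ioi_succ]

namespace Matrix

section CommRing

variable {R : Type*} [CommRing R]

theorem det_eq_of_forall_col_eq_smul_add_const {n : Type*} [DecidableEq n] [Fintype n]
    {A B : Matrix n n R} (c : n → R) (k : n) (hk : c k = 0)
    (A_eq : ∀ i j, A i j = B i j + c j * B i k) : det A = det B := by
  rw [← det_transpose A, ← det_transpose B]
  exact det_eq_of_forall_row_eq_smul_add_const c k hk fun i j => A_eq j i

theorem det_succ_of_row_zero_succ_eq_zero {n : ℕ} {A : Matrix (Fin (n + 1)) (Fin (n + 1)) R}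
    (h : ∀ j : Fin n, A 0 j.succ = 0) : det A = A 0 0 * det (A.submatrix Fin.succ Fin.succ) := by
  rw [det_succ_row_zero, Fin.sum_univ_succ]
  simp [h]

end CommRing

section Field

variable {K : Type*} [Field K]

def cauchy {m n : Type*} (s : m → K) (t : n → K) : Matrix m n K :=
  of fun i j => (s i - t j)⁻¹

@[simp]
theorem cauchy_apply {m n : Type*} (s : m → K) (t : n → K) (i : m) (j : n) :
    cauchy s t i j = (s i - t j)⁻¹ := rfl

theorem det_cauchy_succ {n : ℕ} (s t : Fin (n + 1) → K) (hst : ∀ i j, s i ≠ t j) :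
    det (cauchy s t) = (s 0 - t 0)⁻¹ * (∏ i : Fin n, (s i.succ - s 0) / (s i.succ - t 0)) *
      (∏ j : Fin n, (t 0 - t j.succ) / (s 0 - t j.succ)) *
        det (cauchy (Fin.tail s) (Fin.tail t)) := by
  have hne : ∀ i j, s i - t j ≠ 0 := fun i j => sub_ne_zero.mpr (hst i j)
  set c : Fin (n + 1) → K := Fin.cons 0 fun j => -(s 0 - t 0) / (s 0 - t j.succ)
  set D : Matrix (Fin (n + 1)) (Fin (n + 1)) K :=
    of fun i j => cauchy s t i j + c j * cauchy s t i 0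
  have hD : det D = det (cauchy s t) :=
    det_eq_of_forall_col_eq_smul_add_const c 0 rfl fun _ _ => rfl
  have reduce : ∀ i (j : Fin n), D i j.succ =
      (s i - s 0) / (s i - t 0) * ((t 0 - t j.succ) / (s 0 - t j.succ)) * (s i - t j.succ)⁻¹ := by
    intro i j
    have hij := hne i j.succ
    have h0j := hne 0 j.succ
    have hi0 := hne i 0
    simp only [D, c, of_apply, cauchy_apply, Fin.cons_succ]
    field_simp
    ring
  have hsub : D.submatrix Fin.succ Fin.succ =
      diagonal (fun i : Fin n => (s i.succ - s 0) / (s i.succ - t 0)) *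
        cauchy (Fin.tail s) (Fin.tail t) *
          diagonal (fun j : Fin n => (t 0 - t j.succ) / (s 0 - t j.succ)) := by
    ext i j
    simp only [submatrix_apply, reduce, mul_diagonal, diagonal_mul, cauchy_apply, Fin.tail]
    ring
  rw [← hD, det_succ_of_row_zero_succ_eq_zero fun j => by simp [reduce], hsub, det_mul, det_mul,
    det_diagonal, det_diagonal]
  simp only [D, c, of_apply, cauchy_apply, Fin.cons_zero, zero_mul, add_zero, neg_sub,
    prod_div_distrib]
  ring

theorem det_cauchy {n : ℕ} (s t : Fin n → K) (hst : ∀ i j, s i ≠ t j) :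
    det (cauchy s t) =
      (∏ j, ∏ i ∈ Iio j, (s j - s i) * (t i - t j)) / ∏ i, ∏ j, (s i - t j) := by
  induction n with
  | zero => simp
  | succ n ih =>
    rw [det_cauchy_succ s t hst, ih (Fin.tail s) (Fin.tail t) fun i j => hst _ _,
      Fin.prod_prod_Iio_succ]
    simp only [Fin.prod_univ_succ, prod_mul_distrib, Fin.tail, div_eq_mul_inv, mul_inv,
      prod_inv_distrib]
    ring

end Field

end Matrix

theorem cauchy_det (n : ℕ) (s t : Fin n → ℂ) (hst : ∀ i j, s i ≠ t j)
    (C : Matrix (Fin n) (Fin n) ℂ) (hC : ∀ i j, C i j = 1 / (s i - t j)) :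
    C.det =
      (∏ j : Fin n, ∏ i ∈ Finset.Iio j, ((s j - s i) * (t i - t j))) /
        ∏ i : Fin n, ∏ j : Fin n, (s i - t j) := by
  have hC' : C = cauchy s t := ext fun i j => by rw [hC, cauchy_apply, one_div]
  rw [hC']
  exact det_cauchy s t hst
end

section
/- Factorization of a Cauchy matrix via Vandermonde matrices: if s_0,…,s_{n-1}, t_0,…,t_{n-1} are 2n pairwise distinct complex numbers and t(x) = ∏_{j=0}^{n-1}(x − t_j), then C_{s,t} = diag(t(s_i)^{-1})_{i=0}^{n-1} · V_s · V_t^{-1} · diag(t'(t_j))_{j=0}^{n-1}, where V_s and V_t are the Vandermonde matrices with knots s_i and t_j respectively. -/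
open Matrix Finset Polynomial

lemma lagrange_key {n : ℕ} (t : Fin n → ℂ) (ht : Function.Injective t) (x : ℂ) (k : Fin n) :
    x ^ (k : ℕ) = ∑ j : Fin n, t j ^ (k : ℕ) *
      ∏ m ∈ Finset.univ.erase j, ((x - t m) * (t j - t m)⁻¹) := by
  have hvs : Set.InjOn t (Finset.univ : Finset (Fin n)) := ht.injOn
  have hdeg : (X ^ (k : ℕ) : ℂ[X]).degree < (Finset.univ : Finset (Fin n)).card := by
    rw [degree_X_pow, Finset.card_univ, Fintype.card_fin]
    exact_mod_cast k.isLt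
  have h := Lagrange.eq_interpolate hvs hdeg
  have := congrArg (Polynomial.eval x) h
  rw [Lagrange.interpolate_apply, eval_finset_sum] at this
  simpa [Lagrange.basis, Lagrange.basisDivisor, eval_prod, mul_comm] using this

theorem cauchy_factorization (n : ℕ) (s t : Fin n → ℂ)
    (hdist : Function.Injective (Sum.elim s t))
    (C Vs Vt : Matrix (Fin n) (Fin n) ℂ)
    (hC : ∀ i j, C i j = 1 / (s i - t j))
    (hVs : ∀ i j, Vs i j = s i ^ (j : ℕ))
    (hVt : ∀ i j, Vt i j = t i ^ (j : ℕ)) :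
    C = diagonal (fun i => (∏ j : Fin n, (s i - t j))⁻¹) * Vs * Vt⁻¹ *
          diagonal (fun j => ∏ k ∈ Finset.univ.erase j, (t j - t k)) := by
  have ht : Function.Injective t := fun a b h => by
    have := @hdist (Sum.inr a) (Sum.inr b) (by simpa using h)
    simpa using this
  have hst : ∀ i j, s i ≠ t j := fun i j h => by
    have := @hdist (Sum.inl i) (Sum.inr j) (by simpa using h)
    simp at this
  -- nonzero facts
  have hd2 : ∀ j, (∏ k ∈ Finset.univ.erase j, (t j - t k)) ≠ 0 := fun j =>
    Finset.prod_ne_zero_iff.2 fun k hk =>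
      sub_ne_zero.2 fun h => (Finset.mem_erase.1 hk).1 (ht h).symm
  have hd1 : ∀ i, (∏ j : Fin n, (s i - t j)) ≠ 0 := fun i =>
    Finset.prod_ne_zero_iff.2 fun j _ => sub_ne_zero.2 (hst i j)
  -- Vt is vandermonde, invertible
  have hVt_eq : Vt = Matrix.vandermonde t := by
    ext i j; simp [hVt, Matrix.vandermonde]
  have hdet : IsUnit Vt.det := by
    rw [hVt_eq, Matrix.det_vandermonde, isUnit_iff_ne_zero]
    refine Finset.prod_ne_zero_iff.2 fun i _ => Finset.prod_ne_zero_iff.2 fun j hj => ?_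
    exact sub_ne_zero.2 fun h => absurd (ht h) (Finset.mem_Ioi.1 hj).ne'
  have key : C * diagonal (fun j => (∏ k ∈ Finset.univ.erase j, (t j - t k))⁻¹) * Vt
      = diagonal (fun i => (∏ j : Fin n, (s i - t j))⁻¹) * Vs := by
    ext i k
    rw [Matrix.diagonal_mul, hVs]
    rw [Matrix.mul_apply]
    simp only [Matrix.mul_diagonal, hC, hVt]
    have hl := lagrange_key t ht (s i) k
    have : (∏ j : Fin n, (s i - t j))⁻¹ * (s i ^ (k : ℕ))
        = ∑ j : Fin n, (∏ m : Fin n, (s i - t m))⁻¹ * (t j ^ (k : ℕ) *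
            ∏ m ∈ Finset.univ.erase j, ((s i - t m) * (t j - t m)⁻¹)) := by
      rw [← Finset.mul_sum, ← hl]
    rw [this]
    refine Finset.sum_congr rfl fun j _ => ?_
    have hfac : (∏ m : Fin n, (s i - t m)) = (s i - t j) * ∏ m ∈ Finset.univ.erase j, (s i - t m) :=
      (Finset.mul_prod_erase _ _ (Finset.mem_univ j)).symm
    rw [hfac, Finset.prod_mul_distrib, mul_inv]
    have he : (∏ m ∈ Finset.univ.erase j, (s i - t m)) ≠ 0 :=
      Finset.prod_ne_zero_iff.2 fun m _ => sub_ne_zero.2 (hst i m)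
    have hP : (∏ m ∈ Finset.univ.erase j, (s i - t m))⁻¹ *
        (∏ m ∈ Finset.univ.erase j, (s i - t m)) = 1 := inv_mul_cancel₀ he
    simp only [Finset.prod_inv_distrib] at hP ⊢
    linear_combination (-(1/(s i - t j)) * (∏ m ∈ Finset.univ.erase j, (t j - t m))⁻¹ *
      t j ^ (k : ℕ)) * hP
  have hVtinv := Matrix.nonsing_inv_mul Vt hdet
  have hinv2 : diagonal (fun j => (∏ k ∈ Finset.univ.erase j, (t j - t k))⁻¹) *
      diagonal (fun j => ∏ k ∈ Finset.univ.erase j, (t j - t k)) = 1 := by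
    rw [Matrix.diagonal_mul_diagonal]
    convert Matrix.diagonal_one
    exact inv_mul_cancel₀ (hd2 _)
  calc C = C * diagonal (fun j => (∏ k ∈ Finset.univ.erase j, (t j - t k))⁻¹) * Vt * Vt⁻¹ *
        diagonal (fun j => ∏ k ∈ Finset.univ.erase j, (t j - t k)) := by
        rw [Matrix.mul_nonsing_inv_cancel_right _ _ hdet, Matrix.mul_assoc, hinv2, Matrix.mul_one]
    _ = _ := by rw [key]
end

section
/- Separation bound for low-rank approximation of Cauchy matrices: suppose the sets S = {s_0,…,s_{n-1}} and T = {t_0,…,t_{n-1}} are (θ,c)-separated, i.e., |t_j − c| ≤ θ |s_i − c| for all i,j with 0 < θ < 1, and let δ = min_i |s_i − c| > 0. Then for every positive integer k, the matrix Ĉ with entries Ĉ_{i,j} = Σ_{h=0}^{k} (t_j − c)^h / (s_i − c)^{h+1} has rank at most k+1 and satisfies |1/(s_i − t_j) − Ĉ_{i,j}| ≤ θ^{k+1} / ((1 − θ) δ) for all i, j. -/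
open Matrix Finset

/-! Ĉ truncates the expansion 1/(s - t) = Σ_h (t - c)^h / (s - c)^(h+1) at order k, so it is a
sum of k + 1 rank-one matrices, and the truncation error is exactly the geometric tail
((t - c)/(s - c))^(k+1) / (s - t), whose denominator is at least (1 - θ)|s - c| in modulus. -/

theorem Matrix.rank_le_of_eq_sum_range {m n R : Type*} [Fintype m] [Fintype n] [CommRing R]
    [StrongRankCondition R] {r : ℕ} (A : Matrix m n R) (f : ℕ → m → R) (g : ℕ → n → R)
    (hA : ∀ i j, A i j = ∑ h ∈ range r, f h i * g h j) : A.rank ≤ r := by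
  have hFG : A = of (fun i (h : Fin r) => f h i) * of (fun (h : Fin r) j => g h j) := by
    ext i j
    rw [hA, mul_apply, ← Fin.sum_univ_eq_sum_range (fun h => f h i * g h j)]
    rfl
  rw [hFG]
  exact (rank_mul_le_left _ _).trans
    (by simpa using rank_le_card_width (of fun i (h : Fin r) => f h i))

theorem one_div_sub_sub_sum_range_div_pow {K : Type*} [Field K] {a b : K} (ha : a ≠ 0)
    (hab : a ≠ b) (m : ℕ) :
    1 / (a - b) - ∑ h ∈ range m, b ^ h / a ^ (h + 1) = (b / a) ^ m / (a - b) := by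
  have hr : b / a ≠ 1 := fun h => hab ((div_eq_one_iff_eq ha).1 h).symm
  have hterm : ∀ h ∈ range m, b ^ h / a ^ (h + 1) = (b / a) ^ h / a := by
    intro h _
    rw [div_pow, pow_succ, div_div]
  rw [sum_congr rfl hterm, ← sum_div, geom_sum_eq hr]
  have hab' : a - b ≠ 0 := sub_ne_zero.2 hab
  field_simp
  ring

theorem norm_one_div_sub_sub_sum_range_div_pow_le {𝕜 : Type*} [NormedField 𝕜] {a b : 𝕜}
    {θ : ℝ} (hθ : θ < 1) (hab : ‖b‖ ≤ θ * ‖a‖) (ha : a ≠ 0) (m : ℕ) :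
    ‖1 / (a - b) - ∑ h ∈ range m, b ^ h / a ^ (h + 1)‖ ≤ θ ^ m / ((1 - θ) * ‖a‖) := by
  have ha' : 0 < ‖a‖ := norm_pos_iff.2 ha
  have hratio : ‖b / a‖ ≤ θ := by rwa [norm_div, div_le_iff₀ ha']
  have hsub : (1 - θ) * ‖a‖ ≤ ‖a - b‖ := by
    nlinarith [norm_sub_norm_le a b]
  have hθ0 : 0 ≤ θ := (norm_nonneg _).trans hratio
  have hab' : a ≠ b := by
    rintro rfl
    nlinarith
  rw [one_div_sub_sub_sum_range_div_pow ha hab', norm_div, norm_pow]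
  exact div_le_div₀ (by positivity) (pow_le_pow_left₀ (norm_nonneg _) hratio m)
    (by nlinarith) hsub

theorem cauchy_low_rank_approximation_general (n : ℕ) (s t : Fin n → ℂ) (c : ℂ)
    (θ δ : ℝ) (hθ0 : 0 < θ) (hθ1 : θ < 1)
    (hsep : ∀ i j, ‖t j - c‖ ≤ θ * ‖s i - c‖)
    (hδ : ∀ i, δ ≤ ‖s i - c‖) (hδ0 : 0 < δ)
    (k : ℕ)
    (Chat : Matrix (Fin n) (Fin n) ℂ)
    (hChat : ∀ i j, Chat i j =
      ∑ h ∈ Finset.range (k + 1), (t j - c) ^ h / (s i - c) ^ (h + 1)) :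
    Chat.rank ≤ k + 1 ∧
      ∀ i j, ‖1 / (s i - t j) - Chat i j‖ ≤
        θ ^ (k + 1) / ((1 - θ) * δ) := by
  refine ⟨Chat.rank_le_of_eq_sum_range (fun h i => 1 / (s i - c) ^ (h + 1))
    (fun h j => (t j - c) ^ h) fun i j => by simp only [hChat, one_div_mul_eq_div],
    fun i j => ?_⟩
  have hsc : s i - c ≠ 0 := norm_pos_iff.1 (hδ0.trans_le (hδ i))
  calc ‖1 / (s i - t j) - Chat i j‖
      = ‖1 / ((s i - c) - (t j - c)) -
          ∑ h ∈ range (k + 1), (t j - c) ^ h / (s i - c) ^ (h + 1)‖ := by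
        rw [hChat, sub_sub_sub_cancel_right]
    _ ≤ θ ^ (k + 1) / ((1 - θ) * ‖s i - c‖) :=
        norm_one_div_sub_sub_sum_range_div_pow_le hθ1 (hsep i j) hsc _
    _ ≤ θ ^ (k + 1) / ((1 - θ) * δ) := by
        gcongr
        exact hδ i

theorem cauchy_low_rank_approximation (n : ℕ) (s t : Fin n → ℂ) (c : ℂ)
    (θ δ : ℝ) (hθ0 : 0 < θ) (hθ1 : θ < 1)
    (hsep : ∀ i j, ‖t j - c‖ ≤ θ * ‖s i - c‖)
    (hδ : ∀ i, δ ≤ ‖s i - c‖) (hδ0 : 0 < δ)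
    (k : ℕ) (hk : 0 < k)
    (Chat : Matrix (Fin n) (Fin n) ℂ)
    (hChat : ∀ i j, Chat i j =
      ∑ h ∈ Finset.range (k + 1), (t j - c) ^ h / (s i - c) ^ (h + 1)) :
    Chat.rank ≤ k + 1 ∧
      ∀ i j, ‖1 / (s i - t j) - Chat i j‖ ≤
        θ ^ (k + 1) / ((1 - θ) * δ) :=
  cauchy_low_rank_approximation_general n s t c θ δ hθ0 hθ1 hsep hδ hδ0 k Chat hChat
end
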